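/- Under the trajectory setup, let ε ≥ 0 and R_max ≥ 0 be given, and let π be a policy satisfying ∑_{τ} q_π(τ) · ∑_{t=1}^{T−1} KL(q_dyn(· | s_t, a_t) ‖ p_dyn(· | s_t, a_t)) ≤ ε, and such that |R_π(τ)| ≤ R_max for every trajectory τ with q_π(τ) > 0 or p_π(τ) > 0. Then |∑_τ q_π(τ) · R_π(τ) − ∑_τ p_π(τ) · R_π(τ)| ≤ 2 · R_max · √(ε / 2). -/

import Mathlib

open Finset

/-- KL divergence between two probability mass functions on a finite type,
with the convention `0 · log 0 = 0` (which holds automatically in `ℝ`). -/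
noncomputable def KL {X : Type*} [Fintype X] (μ ν : PMF X) : ℝ :=
  ∑ x, (μ x).toReal * Real.log ((μ x).toReal / (ν x).toReal)

/-- The index `t` of a trajectory, regarded inside `Fin T`. -/
def idx1 {T : ℕ} (t : Fin (T - 1)) : Fin T := ⟨t.1, by have := t.2; omega⟩

/-- The index `t + 1` of a trajectory, regarded inside `Fin T`. -/
def idx2 {T : ℕ} (t : Fin (T - 1)) : Fin T := ⟨t.1 + 1, by have := t.2; omega⟩

/-- Probability of the trajectory `τ = (s₁, a₁, …, s_T, a_T)` under initial
distribution `p₁`, dynamics `dyn` and policy `π`: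
`p₁(s₁) · ∏_{t=1}^{T} π(a_t|s_t) · ∏_{t=1}^{T−1} dyn(s_{t+1}|s_t,a_t)`. -/
noncomputable def trajProb {S A : Type*} {T : ℕ} (hT : 1 ≤ T)
    (p₁ : PMF S) (dyn : S → A → PMF S) (π : S → PMF A)
    (τ : Fin T → S × A) : ℝ :=
  (p₁ (τ ⟨0, hT⟩).1).toReal
    * (∏ t : Fin T, (π (τ t).1 (τ t).2).toReal)
    * (∏ t : Fin (T - 1), (dyn (τ (idx1 t)).1 (τ (idx1 t)).2 (τ (idx2 t)).1).toReal)

/-- Entropy-regularized return of a trajectory: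
`∑_{t=1}^{T} (r(s_t,a_t) − log π(a_t|s_t))`. -/
noncomputable def entReturn {S A : Type*} {T : ℕ}
    (r : S → A → ℝ) (π : S → PMF A) (τ : Fin T → S × A) : ℝ :=
  ∑ t : Fin T, (r (τ t).1 (τ t).2 - Real.log ((π (τ t).1 (τ t).2)).toReal)

/-- The DARC reward correction `Δr(s,a,s') = log p_dyn(s'|s,a) − log q_dyn(s'|s,a)`. -/
noncomputable def Δr {S A : Type*} (qdyn pdyn : S → A → PMF S)
    (s : S) (a : A) (s' : S) : ℝ :=
  Real.log ((pdyn s a s').toReal) - Real.log ((qdyn s a s').toReal)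

/-- Expected (under the source trajectory distribution) sum of per-step KL
divergences between source and target dynamics. -/
noncomputable def expKL {S A : Type*} [Fintype S] [Fintype A] {T : ℕ}
    (hT : 1 ≤ T) (p₁ : PMF S) (qdyn pdyn : S → A → PMF S) (π : S → PMF A) : ℝ :=
  ∑ τ : Fin T → S × A, trajProb hT p₁ qdyn π τ *
    ∑ t : Fin (T - 1),
      KL (qdyn (τ (idx1 t)).1 (τ (idx1 t)).2) (pdyn (τ (idx1 t)).1 (τ (idx1 t)).2)

/-!
Under the source law the log-likelihood ratio of a trajectory is a sum of per-step log-ratios of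
the dynamics, so the chain rule (an induction on the horizon that peels off the first
state-action pair) gives `KL(q_π ‖ p_π) = expKL ≤ ε`. Pinsker's inequality turns this into
`‖q_π - p_π‖₁ ≤ √(2ε)`, and since `|R_π| ≤ R_max` wherever the two laws differ, the expected
returns differ by at most `R_max ‖q_π - p_π‖₁ ≤ 2 R_max √(ε/2)`. Pinsker itself follows from
the pointwise bound `3 (x - 1)² ≤ (2x + 4)(x log x - x + 1)` and Cauchy-Schwarz.
-/

open InformationTheory

section Pinsker

open Real

lemma monotoneOn_add_one_mul_log_sub :
    MonotoneOn (fun x : ℝ => (x + 1) * log x - 2 * (x - 1)) (Set.Ioi 0) := by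
  have hderiv : ∀ x : ℝ, 0 < x →
      HasDerivAt (fun x : ℝ => (x + 1) * log x - 2 * (x - 1)) (log x - (1 - x⁻¹)) x := by
    intro x hx
    refine ((((hasDerivAt_id x).add_const 1).mul (hasDerivAt_log hx.ne')).sub
      (((hasDerivAt_id x).sub_const 1).const_mul 2)).congr_deriv ?_
    simp only [id]
    field_simp
    ring
  refine monotoneOn_of_hasDerivWithinAt_nonneg (convex_Ioi 0)
    (fun x hx => (hderiv x hx).continuousAt.continuousWithinAt)
    (fun x hx => (hderiv x (interior_subset hx)).hasDerivWithinAt) fun x hx => ?_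
  rw [interior_Ioi] at hx
  exact sub_nonneg.2 (one_sub_inv_le_log_of_pos hx)

lemma three_mul_sq_sub_one_le_mul_klFun {x : ℝ} (hx : 0 ≤ x) :
    3 * (x - 1) ^ 2 ≤ (2 * x + 4) * klFun x := by
  set g : ℝ → ℝ := fun x => (2 * x + 4) * klFun x - 3 * (x - 1) ^ 2
  set u : ℝ → ℝ := fun x => (x + 1) * log x - 2 * (x - 1)
  have hderiv : ∀ y : ℝ, 0 < y → HasDerivAt g (4 * u y) y := by
    intro y hy
    refine ((((hasDerivAt_id y).const_mul 2).add_const 4).mul (hasDerivAt_klFun hy.ne')).sub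
      ((((hasDerivAt_id y).sub_const 1).pow 2).const_mul 3) |>.congr_deriv ?_
    simp only [u, klFun_apply, id]
    ring
  have hcont : ContinuousOn g (Set.Ici 0) := by
    unfold g; fun_prop
  -- `g' = 4 u` and `u` is increasing with `u 1 = 0`, so `g` is minimal at `1`.
  have hu_mono : MonotoneOn u (Set.Ioi 0) := monotoneOn_add_one_mul_log_sub
  have hu1 : u 1 = 0 := by simp [u]
  have hg1 : g 1 = 0 := by simp [g, klFun_one]
  suffices 0 ≤ g x by simp only [g] at this; linarith
  rcases le_total 1 x with h1 | h1
  · have hmono : MonotoneOn g (Set.Ici 1) := by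
      refine monotoneOn_of_hasDerivWithinAt_nonneg (convex_Ici 1)
        (hcont.mono (Set.Ici_subset_Ici.2 zero_le_one))
        (fun y hy => (hderiv y ?_).hasDerivWithinAt) fun y hy => ?_
      all_goals rw [interior_Ici] at hy
      · exact zero_lt_one.trans hy
      · have := hu_mono (Set.mem_Ioi.2 zero_lt_one) (Set.mem_Ioi.2 (zero_lt_one.trans hy)) hy.le
        linarith
    exact hg1 ▸ hmono Set.self_mem_Ici h1 h1
  · have hanti : AntitoneOn g (Set.Icc 0 1) := by
      refine antitoneOn_of_hasDerivWithinAt_nonpos (convex_Icc 0 1)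
        (hcont.mono Set.Icc_subset_Ici_self)
        (fun y hy => (hderiv y ?_).hasDerivWithinAt) fun y hy => ?_
      all_goals rw [interior_Icc] at hy
      · exact hy.1
      · have := hu_mono (Set.mem_Ioi.2 hy.1) (Set.mem_Ioi.2 zero_lt_one) hy.2.le
        linarith
    exact hg1 ▸ hanti ⟨hx, h1⟩ ⟨zero_le_one, le_rfl⟩ h1

lemma three_mul_sq_sub_div_le_mul_log_div {a b : ℝ} (ha : 0 ≤ a) (hb : 0 ≤ b)
    (hab : b = 0 → a = 0) :
    3 * (a - b) ^ 2 / (2 * a + 4 * b) ≤ a * log (a / b) - a + b := by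
  rcases hb.eq_or_lt with rfl | hb
  · simp [hab rfl]
  have key := three_mul_sq_sub_one_le_mul_klFun (div_nonneg ha hb.le)
  rw [klFun_apply] at key
  rw [div_le_iff₀ (by positivity)]
  have h3 : 3 * (a - b) ^ 2 = b ^ 2 * (3 * (a / b - 1) ^ 2) := by field_simp
  have h4 : (a * log (a / b) - a + b) * (2 * a + 4 * b)
      = b ^ 2 * ((2 * (a / b) + 4) * (a / b * log (a / b) + 1 - a / b)) := by
    field_simp
    ring
  rw [h3, h4]
  exact mul_le_mul_of_nonneg_left key (sq_nonneg b)

/-- Pinsker's inequality. -/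
theorem sq_sum_abs_sub_le_two_mul_sum_mul_log_div {ι : Type*} [Fintype ι] {w v : ι → ℝ}
    (hw : ∀ i, 0 ≤ w i) (hv : ∀ i, 0 ≤ v i) (hw1 : ∑ i, w i = 1) (hv1 : ∑ i, v i = 1)
    (hwv : ∀ i, v i = 0 → w i = 0) :
    (∑ i, |w i - v i|) ^ 2 ≤ 2 * ∑ i, w i * log (w i / v i) := by
  have hCS : (∑ i, |w i - v i|) ^ 2
      ≤ (∑ i, 3 * (w i - v i) ^ 2 / (2 * w i + 4 * v i)) * ∑ i, (2 * w i + 4 * v i) / 3 := by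
    have hden : ∀ i, 0 ≤ 2 * w i + 4 * v i := fun i => by linarith [hw i, hv i]
    refine Finset.sum_sq_le_sum_mul_sum_of_sq_le_mul _
      (fun i _ => div_nonneg (by positivity) (hden i)) (fun i _ => by linarith [hden i])
      fun i _ => ?_
    rcases (hden i).eq_or_lt with h | h
    · have hvi : v i = 0 := by linarith [hw i, hv i]
      simp [hvi, hwv i hvi]
    · refine le_of_eq ?_
      rw [sq_abs]
      field_simp
      exact (mul_div_cancel_right₀ _ (by linarith)).symm
  have hweights : ∑ i, (2 * w i + 4 * v i) / 3 = 2 := by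
    simp only [← Finset.sum_div, Finset.sum_add_distrib, ← Finset.mul_sum, hw1, hv1]
    norm_num
  have hpoint : ∑ i, 3 * (w i - v i) ^ 2 / (2 * w i + 4 * v i)
      ≤ ∑ i, (w i * log (w i / v i) - w i + v i) :=
    Finset.sum_le_sum fun i _ => three_mul_sq_sub_div_le_mul_log_div (hw i) (hv i) (hwv i)
  have hcancel : ∑ i, (w i * log (w i / v i) - w i + v i) = ∑ i, w i * log (w i / v i) := by
    rw [Finset.sum_add_distrib, Finset.sum_sub_distrib, hw1, hv1]
    ring
  rw [hweights] at hCS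
  rw [hcancel] at hpoint
  linarith

end Pinsker

lemma PMF.sum_toReal_eq_one {X : Type*} [Fintype X] (p : PMF X) : ∑ x, (p x).toReal = 1 := by
  rw [← ENNReal.toReal_sum fun x _ => p.apply_ne_top x, ← tsum_fintype (L := .unconditional _),
    p.tsum_coe, ENNReal.toReal_one]

lemma KL_self {X : Type*} [Fintype X] (μ : PMF X) : KL μ μ = 0 :=
  Finset.sum_eq_zero fun x _ => by
    obtain h | h := eq_or_ne (μ x).toReal 0 <;> simp [h]

lemma Fin.sum_univ_pi_cons {β M : Type*} [Fintype β] [AddCommMonoid M] {n : ℕ}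
    (f : (Fin (n + 1) → β) → M) :
    ∑ τ, f τ = ∑ x, ∑ τ₀ : Fin n → β, f (Fin.cons x τ₀) := by
  rw [← (Fin.consEquiv fun _ => β).sum_comp f, Fintype.sum_prod_type]
  rfl

lemma Fin.sum_univ_pi_one {β M : Type*} [Fintype β] [AddCommMonoid M]
    (f : (Fin 1 → β) → M) : ∑ τ, f τ = ∑ x, f fun _ => x :=
  ((Equiv.funUnique (Fin 1) β).symm.sum_comp f).symm

@[to_additive]
lemma prod_idx_cons {β M : Type*} [CommMonoid M] {m : ℕ} (g : β → β → M) (x : β)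
    (τ : Fin (m + 1) → β) :
    ∏ t : Fin (m + 2 - 1),
        g ((Fin.cons x τ : Fin (m + 2) → β) (idx1 t)) ((Fin.cons x τ : Fin (m + 2) → β) (idx2 t))
      = g x (τ 0) * ∏ t : Fin (m + 1 - 1), g (τ (idx1 t)) (τ (idx2 t)) :=
  Fin.prod_univ_succ (n := m) _

lemma mul_log_mul_div_mul {a b c d e : ℝ} (hab : b = 0 → a = 0) (hcd : d = 0 → c = 0) :
    a * e * c * Real.log (a * e * c / (b * e * d))
      = a * e * (c * Real.log (a / b) + c * Real.log (c / d)) := by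
  obtain rfl | ha := eq_or_ne a 0
  · simp
  obtain rfl | he := eq_or_ne e 0
  · simp
  obtain rfl | hc := eq_or_ne c 0
  · simp
  have hb : b ≠ 0 := mt hab ha
  have hd : d ≠ 0 := mt hcd hc
  rw [show a * e * c / (b * e * d) = a / b * (c / d) by field_simp,
    Real.log_mul (div_ne_zero ha hb) (div_ne_zero hc hd)]
  ring

lemma abs_sum_mul_sub_sum_mul_le {ι : Type*} [Fintype ι] {w v R : ι → ℝ} {C : ℝ}
    (hR : ∀ i, w i ≠ v i → |R i| ≤ C) :
    |∑ i, w i * R i - ∑ i, v i * R i| ≤ C * ∑ i, |w i - v i| := by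
  rw [← Finset.sum_sub_distrib, Finset.mul_sum]
  refine (Finset.abs_sum_le_sum_abs _ _).trans (Finset.sum_le_sum fun i _ => ?_)
  obtain h | h := eq_or_ne (w i) (v i)
  · simp [h]
  · rw [← sub_mul, abs_mul, mul_comm C]
    exact mul_le_mul_of_nonneg_left (hR i h) (abs_nonneg _)

section Trajectory

variable {S A : Type*}

lemma trajProb_nonneg {T : ℕ} (hT : 1 ≤ T) (μ : PMF S) (dyn : S → A → PMF S) (π : S → PMF A)
    (τ : Fin T → S × A) : 0 ≤ trajProb hT μ dyn π τ := by
  unfold trajProb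
  positivity

lemma trajProb_one (hT : 1 ≤ 1) (μ : PMF S) (dyn : S → A → PMF S) (π : S → PMF A)
    (τ : Fin 1 → S × A) :
    trajProb hT μ dyn π τ = (μ (τ 0).1).toReal * (π (τ 0).1 (τ 0).2).toReal := by
  simp [trajProb]

lemma trajProb_cons {m : ℕ} (hT : 1 ≤ m + 2) (μ : PMF S) (dyn : S → A → PMF S)
    (π : S → PMF A) (x : S × A) (τ : Fin (m + 1) → S × A) :
    trajProb hT μ dyn π (Fin.cons x τ)
      = (μ x.1).toReal * (π x.1 x.2).toReal
        * trajProb (Nat.le_add_left 1 m) (dyn x.1 x.2) dyn π τ := by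
  have hdyn := prod_idx_cons (fun y z : S × A => (dyn y.1 y.2 z.1).toReal) x τ
  beta_reduce at hdyn
  rw [trajProb, trajProb, Fin.prod_univ_succ, hdyn]
  simp only [Fin.zero_eta, Fin.cons_zero, Fin.cons_succ]
  ring

lemma trajProb_eq_zero_of_eq_zero {T : ℕ} (hT : 1 ≤ T) {μ ν : PMF S}
    {qdyn pdyn : S → A → PMF S} (hμν : ∀ s, ν s = 0 → μ s = 0)
    (hqp : ∀ s a s', pdyn s a s' = 0 → qdyn s a s' = 0) (π : S → PMF A) (τ : Fin T → S × A)
    (h : trajProb hT ν pdyn π τ = 0) : trajProb hT μ qdyn π τ = 0 := by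
  simp only [trajProb, mul_eq_zero, Finset.prod_eq_zero_iff, Finset.mem_univ, true_and,
    ENNReal.toReal_eq_zero_iff, PMF.apply_ne_top, or_false] at h ⊢
  rcases h with (h | h) | ⟨t, h⟩
  · exact Or.inl (Or.inl (hμν _ h))
  · exact Or.inl (Or.inr h)
  · exact Or.inr ⟨t, hqp _ _ _ h⟩

variable [Fintype S] [Fintype A]

lemma sum_pmf_mul_policy_mul (μ : PMF S) (π : S → PMF A) (f : S → ℝ) :
    ∑ x : S × A, (μ x.1).toReal * (π x.1 x.2).toReal * f x.1 = ∑ s, (μ s).toReal * f s := by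
  rw [Fintype.sum_prod_type]
  refine Finset.sum_congr rfl fun s _ => ?_
  calc _ = (μ s).toReal * f s * ∑ a, (π s a).toReal := by
        rw [Finset.mul_sum]
        exact Finset.sum_congr rfl fun a _ => by ring
    _ = (μ s).toReal * f s := by rw [PMF.sum_toReal_eq_one, mul_one]

lemma KL_eq_sum_pmf_mul_policy (μ ν : PMF S) (π : S → PMF A) :
    KL μ ν = ∑ x : S × A, (μ x.1).toReal * (π x.1 x.2).toReal
      * Real.log ((μ x.1).toReal / (ν x.1).toReal) :=
  (sum_pmf_mul_policy_mul μ π _).symm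

lemma sum_trajProb (dyn : S → A → PMF S) (π : S → PMF A) :
    ∀ (m : ℕ) (hT : 1 ≤ m + 1) (μ : PMF S), ∑ τ, trajProb hT μ dyn π τ = 1
  | 0, hT, μ => by
    rw [Fin.sum_univ_pi_one]
    simp only [trajProb_one]
    simpa [PMF.sum_toReal_eq_one] using sum_pmf_mul_policy_mul μ π fun _ => 1
  | m + 1, hT, μ => by
    simp only [Fin.sum_univ_pi_cons, trajProb_cons, ← Finset.mul_sum, sum_trajProb dyn π m,
      mul_one]
    simpa [PMF.sum_toReal_eq_one] using sum_pmf_mul_policy_mul μ π fun _ => 1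

lemma expKL_one (hT : 1 ≤ 1) (μ : PMF S) (qdyn pdyn : S → A → PMF S) (π : S → PMF A) :
    expKL hT μ qdyn pdyn π = 0 := by
  simp [expKL]

lemma expKL_cons {m : ℕ} (hT : 1 ≤ m + 2) (μ : PMF S) (qdyn pdyn : S → A → PMF S)
    (π : S → PMF A) :
    expKL hT μ qdyn pdyn π
      = ∑ x : S × A, (μ x.1).toReal * (π x.1 x.2).toReal
        * (KL (qdyn x.1 x.2) (pdyn x.1 x.2)
          + expKL (Nat.le_add_left 1 m) (qdyn x.1 x.2) qdyn pdyn π) := by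
  have hstep := fun x τ => sum_idx_cons
    (fun y _ : S × A => KL (qdyn y.1 y.2) (pdyn y.1 y.2)) (m := m) x τ
  beta_reduce at hstep
  rw [expKL, Fin.sum_univ_pi_cons]
  refine Finset.sum_congr rfl fun x _ => ?_
  simp only [trajProb_cons, hstep, expKL, mul_add, Finset.sum_add_distrib, ← Finset.sum_mul,
    mul_assoc, ← Finset.mul_sum, sum_trajProb, one_mul]

theorem sum_trajProb_mul_log_div {qdyn pdyn : S → A → PMF S}
    (hqp : ∀ s a s', pdyn s a s' = 0 → qdyn s a s' = 0) (π : S → PMF A) :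
    ∀ (m : ℕ) (hT : 1 ≤ m + 1) (μ ν : PMF S), (∀ s, ν s = 0 → μ s = 0) →
      ∑ τ, trajProb hT μ qdyn π τ * Real.log (trajProb hT μ qdyn π τ / trajProb hT ν pdyn π τ)
        = KL μ ν + expKL hT μ qdyn pdyn π
  | 0, hT, μ, ν, _ => by
    rw [Fin.sum_univ_pi_one, expKL_one, add_zero, KL_eq_sum_pmf_mul_policy μ ν π]
    refine Finset.sum_congr rfl fun x _ => ?_
    simp only [trajProb_one]
    obtain he | he := eq_or_ne (π x.1 x.2).toReal 0
    · simp [he]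
    · rw [mul_div_mul_right _ _ he]
  | m + 1, hT, μ, ν, hμν => by
    have hstep : ∀ x τ, trajProb hT μ qdyn π (Fin.cons x τ)
          * Real.log (trajProb hT μ qdyn π (Fin.cons x τ) / trajProb hT ν pdyn π (Fin.cons x τ))
        = (μ x.1).toReal * (π x.1 x.2).toReal
          * (trajProb (Nat.le_add_left 1 m) (qdyn x.1 x.2) qdyn π τ
              * Real.log ((μ x.1).toReal / (ν x.1).toReal)
            + trajProb (Nat.le_add_left 1 m) (qdyn x.1 x.2) qdyn π τ
              * Real.log (trajProb (Nat.le_add_left 1 m) (qdyn x.1 x.2) qdyn π τ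
                / trajProb (Nat.le_add_left 1 m) (pdyn x.1 x.2) pdyn π τ)) := fun x τ => by
      rw [trajProb_cons, trajProb_cons]
      refine mul_log_mul_div_mul (fun h => ?_)
        (trajProb_eq_zero_of_eq_zero _ (hqp x.1 x.2) hqp π τ)
      simp only [ENNReal.toReal_eq_zero_iff, PMF.apply_ne_top, or_false] at h ⊢
      exact hμν _ h
    rw [Fin.sum_univ_pi_cons, expKL_cons, KL_eq_sum_pmf_mul_policy μ ν π,
      ← Finset.sum_add_distrib]
    refine Finset.sum_congr rfl fun x _ => ?_
    simp only [hstep, ← Finset.mul_sum, Finset.sum_add_distrib, ← Finset.sum_mul, sum_trajProb,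
      sum_trajProb_mul_log_div hqp π m _ _ _ (hqp x.1 x.2)]
    ring

end Trajectory

theorem source_target_return_close_general {S A : Type*} [Fintype S] [Fintype A]
    {T : ℕ} (hT : 1 ≤ T)
    (p₁ : PMF S) (qdyn pdyn : S → A → PMF S)
    (hp : ∀ s a s', 0 < pdyn s a s')
    (r : S → A → ℝ) (π : S → PMF A)
    (ε Rmax : ℝ) (hR : 0 ≤ Rmax)
    (hKL : expKL hT p₁ qdyn pdyn π ≤ ε)
    (hbound : ∀ τ : Fin T → S × A,
      (0 < trajProb hT p₁ qdyn π τ ∨ 0 < trajProb hT p₁ pdyn π τ) →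
      |entReturn r π τ| ≤ Rmax) :
    |(∑ τ : Fin T → S × A, trajProb hT p₁ qdyn π τ * entReturn r π τ)
        - ∑ τ : Fin T → S × A, trajProb hT p₁ pdyn π τ * entReturn r π τ|
      ≤ 2 * Rmax * Real.sqrt (ε / 2) := by
  obtain ⟨m, rfl⟩ : ∃ m, T = m + 1 := ⟨T - 1, by omega⟩
  set q := trajProb hT p₁ qdyn π
  set p := trajProb hT p₁ pdyn π
  have hqp : ∀ s a s', pdyn s a s' = 0 → qdyn s a s' = 0 :=
    fun s a s' h => absurd h (hp s a s').ne'
  have hKLq : ∑ τ, q τ * Real.log (q τ / p τ) ≤ ε := by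
    rwa [sum_trajProb_mul_log_div hqp π m hT p₁ p₁ fun _ => id, KL_self, zero_add]
  have hTV : (∑ τ, |q τ - p τ|) ^ 2 ≤ 2 * ε :=
    (sq_sum_abs_sub_le_two_mul_sum_mul_log_div (trajProb_nonneg hT p₁ qdyn π)
      (trajProb_nonneg hT p₁ pdyn π) (sum_trajProb qdyn π m hT p₁) (sum_trajProb pdyn π m hT p₁)
      (trajProb_eq_zero_of_eq_zero hT (fun _ => id) hqp π)).trans (by linarith)
  have hbound_ne : ∀ τ, q τ ≠ p τ → |entReturn r π τ| ≤ Rmax := fun τ hne => by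
    refine hbound τ ?_
    contrapose! hne
    linarith [trajProb_nonneg hT p₁ qdyn π τ, trajProb_nonneg hT p₁ pdyn π τ]
  have hsqrt : (∑ τ, |q τ - p τ|) / 2 ≤ Real.sqrt (ε / 2) :=
    Real.le_sqrt_of_sq_le (by rw [div_pow]; linarith)
  calc _ ≤ Rmax * ∑ τ, |q τ - p τ| := abs_sum_mul_sub_sum_mul_le hbound_ne
    _ ≤ 2 * Rmax * Real.sqrt (ε / 2) := by linarith [mul_le_mul_of_nonneg_left hsqrt hR]

/-- Lemma B.2 of "Off-Dynamics Reinforcement Learning": a policy whose expected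
per-step dynamics KL is at most `ε` attains similar entropy-regularized returns
in the source and target domains. -/
theorem source_target_return_close {S A : Type*} [Fintype S] [Fintype A]
    [Nonempty S] [Nonempty A] {T : ℕ} (hT : 1 ≤ T)
    (p₁ : PMF S) (qdyn pdyn : S → A → PMF S)
    (hq : ∀ s a s', 0 < qdyn s a s') (hp : ∀ s a s', 0 < pdyn s a s')
    (r : S → A → ℝ) (π : S → PMF A)
    (ε Rmax : ℝ) (hε : 0 ≤ ε) (hR : 0 ≤ Rmax)
    (hKL : expKL hT p₁ qdyn pdyn π ≤ ε)
    (hbound : ∀ τ : Fin T → S × A,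
      (0 < trajProb hT p₁ qdyn π τ ∨ 0 < trajProb hT p₁ pdyn π τ) →
      |entReturn r π τ| ≤ Rmax) :
    |(∑ τ : Fin T → S × A, trajProb hT p₁ qdyn π τ * entReturn r π τ)
        - ∑ τ : Fin T → S × A, trajProb hT p₁ pdyn π τ * entReturn r π τ|
      ≤ 2 * Rmax * Real.sqrt (ε / 2) :=
  source_target_return_close_general hT p₁ qdyn pdyn hp r π ε Rmax hR hKL hbound
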